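/- Let M : A ⥤ B be a functor from a discrete category into a componental category B, admitting a pointwise density comonad D. Then a connected object C of B admits a D-coalgebra structure if and only if C is isomorphic to M(A) for some A in A. -/

import Mathlib

open CategoryTheory Limits

universe w v

variable {B : Type v} [Category.{w} B]

/-- An object `C` is connected if every morphism from `C` into a coproduct factors
uniquely through one of the coproduct inclusions. -/
def Connected' (C : B) : Prop :=
  ∀ {I : Type w} (f : I → B) (c : Cofan f), IsColimit c →
    ∀ g : C ⟶ c.pt, ∃! p : Σ i : I, C ⟶ f i, p.2 ≫ c.inj p.1 = g

/-- A category is componental if every object is (isomorphic to) a coproduct of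
connected objects and all coproduct inclusions are monomorphisms. -/
def Componental (B : Type v) [Category.{w} B] : Prop :=
  (∀ X : B, ∃ (I : Type w) (f : I → B) (c : Cofan f),
      (∀ i, Connected' (f i)) ∧ Nonempty (IsColimit c) ∧ Nonempty (c.pt ≅ X)) ∧
  (∀ (I : Type w) (f : I → B) (c : Cofan f), Nonempty (IsColimit c) → ∀ i, Mono (c.inj i))

/-!
Factor a coalgebra structure `ξ : C ⟶ D C` through a single summand, `ξ = g ≫ ι A f`. The counit
law gives `g ≫ f = 𝟙`. The two sides of the comultiplication law factor through the summands of
`D (D C)` indexed by `ι A f` and by `f ≫ ξ`, so connectedness of `C` forces `ι A f = f ≫ ξ`;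
cancelling the monomorphism `ι A f` from `f ≫ g ≫ ι A f = ι A f` gives `f ≫ g = 𝟙`.
-/

theorem Connected'.fst_eq_of_comp_inj_eq {C : B} (hC : Connected' C) {I : Type w} {f : I → B}
    {c : Cofan f} (hc : IsColimit c) {i i' : I} (g : C ⟶ f i) (g' : C ⟶ f i')
    (h : g ≫ c.inj i = g' ≫ c.inj i') : i = i' := by
  obtain ⟨p, -, huniq⟩ := hC f c hc (g ≫ c.inj i)
  exact congrArg Sigma.fst ((huniq ⟨i, g⟩ rfl).trans (huniq ⟨i', g'⟩ h.symm).symm)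

namespace PointwiseDensity

variable {J : Type w} {M : Discrete J ⥤ B} {D : B ⥤ B}
  {ι : ∀ (A : Discrete J) {X : B}, (M.obj A ⟶ X) → (M.obj A ⟶ D.obj X)}

theorem ι_comp_map
    (hc : ∀ X : B, IsColimit (Cofan.mk (D.obj X)
      (fun p : Σ A : Discrete J, (M.obj A ⟶ X) => ι p.1 p.2)))
    (hmap : ∀ {X Y : B} (h : X ⟶ Y),
      D.map h = (hc X).desc (Cofan.mk (D.obj Y)
        (fun p : Σ A : Discrete J, (M.obj A ⟶ X) => ι p.1 (p.2 ≫ h))))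
    (A : Discrete J) {X Y : B} (f : M.obj A ⟶ X) (h : X ⟶ Y) :
    ι A f ≫ D.map h = ι A (f ≫ h) := by
  rw [hmap h]
  exact (hc X).fac _ ⟨⟨A, f⟩⟩

theorem ι_id_comp_map
    (hι : ∀ (A : Discrete J) {X Y : B} (f : M.obj A ⟶ X) (h : X ⟶ Y),
      ι A f ≫ D.map h = ι A (f ≫ h))
    (A : Discrete J) {X : B} (f : M.obj A ⟶ X) :
    ι A (𝟙 (M.obj A)) ≫ D.map f = ι A f := by
  rw [hι, Category.id_comp]

theorem ι_comp_counit
    (hι : ∀ (A : Discrete J) {X Y : B} (f : M.obj A ⟶ X) (h : X ⟶ Y),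
      ι A f ≫ D.map h = ι A (f ≫ h)) {ε : D ⟶ 𝟭 B}
    (hε : ∀ A : Discrete J, ι A (𝟙 (M.obj A)) ≫ ε.app (M.obj A) = 𝟙 (M.obj A))
    (A : Discrete J) {X : B} (f : M.obj A ⟶ X) :
    ι A f ≫ ε.app X = f := by
  rw [← ι_id_comp_map hι, Category.assoc, ε.naturality f, ← Category.assoc, hε]
  exact Category.id_comp f

theorem ι_comp_comult
    (hι : ∀ (A : Discrete J) {X Y : B} (f : M.obj A ⟶ X) (h : X ⟶ Y),
      ι A f ≫ D.map h = ι A (f ≫ h)) {δ : D ⟶ D ⋙ D}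
    (hδ : ∀ A : Discrete J, ι A (𝟙 (M.obj A)) ≫ δ.app (M.obj A)
        = ι A (𝟙 (M.obj A)) ≫ D.map (ι A (𝟙 (M.obj A))))
    (A : Discrete J) {X : B} (f : M.obj A ⟶ X) :
    ι A f ≫ δ.app X = ι A (ι A f) := by
  rw [← ι_id_comp_map hι A f, Category.assoc, δ.naturality f, ← Category.assoc, hδ A,
    Category.assoc, Functor.comp_map, ← D.map_comp, ι_id_comp_map hι, ι_id_comp_map hι]

theorem exists_iso_of_coalgebra
    (hc : ∀ X : B, IsColimit (Cofan.mk (D.obj X)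
      (fun p : Σ A : Discrete J, (M.obj A ⟶ X) => ι p.1 p.2)))
    (hι : ∀ (A : Discrete J) {X Y : B} (f : M.obj A ⟶ X) (h : X ⟶ Y),
      ι A f ≫ D.map h = ι A (f ≫ h)) {ε : D ⟶ 𝟭 B} {δ : D ⟶ D ⋙ D}
    (hε : ∀ A : Discrete J, ι A (𝟙 (M.obj A)) ≫ ε.app (M.obj A) = 𝟙 (M.obj A))
    (hδ : ∀ A : Discrete J, ι A (𝟙 (M.obj A)) ≫ δ.app (M.obj A)
        = ι A (𝟙 (M.obj A)) ≫ D.map (ι A (𝟙 (M.obj A))))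
    (hmono : ∀ (A : Discrete J) {X : B} (f : M.obj A ⟶ X), Mono (ι A f))
    {C : B} (hC : Connected' C) (ξ : C ⟶ D.obj C) (hξε : ξ ≫ ε.app C = 𝟙 C)
    (hξδ : ξ ≫ δ.app C = ξ ≫ D.map ξ) :
    ∃ A : Discrete J, Nonempty (C ≅ M.obj A) := by
  obtain ⟨⟨⟨A, f⟩, g⟩, hξ : g ≫ ι A f = ξ, -⟩ := hC _ _ (hc C) ξ
  have hgf : g ≫ f = 𝟙 C := by
    rw [← hξε, ← hξ, Category.assoc, ι_comp_counit hι hε]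
  have hsummand : (⟨A, ι A f⟩ : Σ A : Discrete J, (M.obj A ⟶ D.obj C)) = ⟨A, f ≫ ξ⟩ := by
    refine hC.fst_eq_of_comp_inj_eq (hc (D.obj C)) g g ?_
    change g ≫ ι A (ι A f) = g ≫ ι A (f ≫ ξ)
    rw [← ι_comp_comult hι hδ, ← hι, ← Category.assoc, ← Category.assoc, hξ, hξδ]
  have hιf : ι A f = f ≫ ξ := eq_of_heq (Sigma.mk.inj_iff.mp hsummand).2
  have hfg : f ≫ g = 𝟙 (M.obj A) := by
    refine (hmono A f).right_cancellation _ _ ?_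
    rw [Category.assoc, hξ, ← hιf, Category.id_comp]
  exact ⟨A, ⟨⟨g, f, hgf, hfg⟩⟩⟩

theorem coalgebra_of_iso
    (hι : ∀ (A : Discrete J) {X Y : B} (f : M.obj A ⟶ X) (h : X ⟶ Y),
      ι A f ≫ D.map h = ι A (f ≫ h)) {ε : D ⟶ 𝟭 B} {δ : D ⟶ D ⋙ D}
    (hε : ∀ A : Discrete J, ι A (𝟙 (M.obj A)) ≫ ε.app (M.obj A) = 𝟙 (M.obj A))
    (hδ : ∀ A : Discrete J, ι A (𝟙 (M.obj A)) ≫ δ.app (M.obj A)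
        = ι A (𝟙 (M.obj A)) ≫ D.map (ι A (𝟙 (M.obj A))))
    {C : B} {A : Discrete J} (e : C ≅ M.obj A) :
    ∃ ξ : C ⟶ D.obj C, ξ ≫ ε.app C = 𝟙 C ∧ ξ ≫ δ.app C = ξ ≫ D.map ξ := by
  refine ⟨e.hom ≫ ι A e.inv, ?_, ?_⟩
  · rw [Category.assoc, ι_comp_counit hι hε, e.hom_inv_id]
  · rw [Category.assoc, ι_comp_comult hι hδ, Category.assoc, hι,
      ← Category.assoc e.inv, e.inv_hom_id, Category.id_comp]

end PointwiseDensity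

open PointwiseDensity in
/-- for `M : A ⥤ B` from a discrete category into a componental category,
with pointwise density comonad `D` (given at `X` by `∐_{A, f : M(A) ⟶ X} M(A)`), a
connected object `C` admits a `D`-coalgebra structure iff `C ≅ M(A)` for some `A`. -/
theorem stmt_8 {J : Type w}
    (M : Discrete J ⥤ B) (D : B ⥤ B)
    (ι : ∀ (A : Discrete J) {X : B}, (M.obj A ⟶ X) → (M.obj A ⟶ D.obj X))
    (hc : ∀ X : B, IsColimit (Cofan.mk (D.obj X)
      (fun p : Σ A : Discrete J, (M.obj A ⟶ X) => ι p.1 p.2)))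
    (hmap : ∀ {X Y : B} (h : X ⟶ Y),
      D.map h = (hc X).desc (Cofan.mk (D.obj Y)
        (fun p : Σ A : Discrete J, (M.obj A ⟶ X) => ι p.1 (p.2 ≫ h))))
    (ε : D ⟶ 𝟭 B) (δ : D ⟶ D ⋙ D)
    (hε : ∀ A : Discrete J, ι A (𝟙 (M.obj A)) ≫ ε.app (M.obj A) = 𝟙 (M.obj A))
    (hδ : ∀ A : Discrete J, ι A (𝟙 (M.obj A)) ≫ δ.app (M.obj A)
        = ι A (𝟙 (M.obj A)) ≫ D.map (ι A (𝟙 (M.obj A))))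
    (hB : Componental B)
    (C : B) (hC : Connected' C) :
    (∃ ξ : C ⟶ D.obj C, ξ ≫ ε.app C = 𝟙 C ∧ ξ ≫ δ.app C = ξ ≫ D.map ξ) ↔
      ∃ A : Discrete J, Nonempty (C ≅ M.obj A) := by
  have hι := ι_comp_map hc hmap
  have hmono : ∀ (A : Discrete J) {X : B} (f : M.obj A ⟶ X), Mono (ι A f) :=
    fun A X f => hB.2 _ _ _ ⟨hc X⟩ ⟨A, f⟩
  exact ⟨fun ⟨ξ, hξε, hξδ⟩ => exists_iso_of_coalgebra hc hι hε hδ hmono hC ξ hξε hξδ,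
    fun ⟨A, ⟨e⟩⟩ => coalgebra_of_iso hι hε hδ e⟩
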